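/- arXiv:1010.2921 — 4 statements merged into one kernel-verified Lean document; each statement's English description precedes it below -/
import Mathlib

section
/- Let f be an electrical s-t flow on a graph G with resistances r, and suppose edge h accounts for a β fraction of the total energy: f(h)²·r_h = β·E_r(f). For γ > 0, define r' by r'_h = γ·r_h and r'_e = r_e for e ≠ h. Then R_eff(r') ≥ (γ/(β + γ(1-β)))·R_eff(r). -/
open Finset

/-- Effective s-t conductance: infimum over potentials with φ(s)=1, φ(t)=0 of the
Dirichlet energy. -/
noncomputable def Ceff {V E : Type*} [Fintype E] (ep : E → V × V) (s t : V)
    (r : E → ℝ) : ℝ :=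
  sInf {x | ∃ φ : V → ℝ, φ s = 1 ∧ φ t = 0 ∧
    x = ∑ e, (φ (ep e).1 - φ (ep e).2) ^ 2 / r e}

/-- Effective s-t resistance. -/
noncomputable def Reff {V E : Type*} [Fintype E] (ep : E → V × V) (s t : V)
    (r : E → ℝ) : ℝ :=
  1 / Ceff ep s t r

/-!
Plugging the optimal potential φ for `r` into the Dirichlet energy for `r'` only changes the
term of `h`, which drops from `β C` to `β C / γ`; hence `Ceff r' ≤ C (β + γ (1 - β)) / γ`
with `C = Ceff r`, and inverting gives the bound. Inverting needs `Ceff r' > 0` whenever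
`C > 0`, which holds because `r' ≤ max 1 γ • r`.
-/

section ScaledEdge

variable {E : Type*} [DecidableEq E] {r r' : E → ℝ} {h : E} {γ : ℝ}

lemma pos_of_scale_edge (hr' : ∀ e, r' e = if e = h then γ * r e else r e)
    (hr : ∀ e, 0 < r e) (hγ : 0 < γ) (e : E) : 0 < r' e := by
  rw [hr' e]
  split_ifs
  exacts [mul_pos hγ (hr e), hr e]

lemma le_max_mul_of_scale_edge (hr' : ∀ e, r' e = if e = h then γ * r e else r e)
    (hr : ∀ e, 0 ≤ r e) (e : E) : r' e ≤ max 1 γ * r e := by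
  rw [hr' e]
  split_ifs
  exacts [mul_le_mul_of_nonneg_right (le_max_right _ _) (hr e),
    le_mul_of_one_le_left (hr e) (le_max_left _ _)]

end ScaledEdge

section Dirichlet

variable {V E : Type*} [Fintype E] (ep : E → V × V)

noncomputable def dirichletEnergy (r : E → ℝ) (φ : V → ℝ) : ℝ :=
  ∑ e, (φ (ep e).1 - φ (ep e).2) ^ 2 / r e

variable {ep}

lemma dirichletEnergy_nonneg {r : E → ℝ} (hr : ∀ e, 0 ≤ r e) (φ : V → ℝ) :
    0 ≤ dirichletEnergy ep r φ :=
  sum_nonneg fun e _ => div_nonneg (sq_nonneg _) (hr e)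

lemma sum_mul_sq_eq_dirichletEnergy {r f : E → ℝ} {φ : V → ℝ} (hr : ∀ e, r e ≠ 0)
    (hOhm : ∀ e, f e = (φ (ep e).1 - φ (ep e).2) / r e) :
    ∑ e, r e * f e ^ 2 = dirichletEnergy ep r φ := by
  refine sum_congr rfl fun e _ => ?_
  rw [hOhm e]
  field_simp [hr e]

lemma dirichletEnergy_sub_dirichletEnergy_of_forall_ne {r r' : E → ℝ} {h : E}
    (hr' : ∀ e, e ≠ h → r' e = r e) (φ : V → ℝ) :
    dirichletEnergy ep r' φ - dirichletEnergy ep r φ =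
      (φ (ep h).1 - φ (ep h).2) ^ 2 / r' h - (φ (ep h).1 - φ (ep h).2) ^ 2 / r h := by
  rw [dirichletEnergy, dirichletEnergy, ← sum_sub_distrib, Fintype.sum_eq_single h]
  intro e he
  rw [hr' e he, sub_self]

lemma dirichletEnergy_le_mul_of_le_mul {r r' : E → ℝ} {c : ℝ} (hc : 0 < c)
    (hr' : ∀ e, 0 < r' e) (hle : ∀ e, r' e ≤ c * r e) (φ : V → ℝ) :
    dirichletEnergy ep r φ ≤ c * dirichletEnergy ep r' φ := by
  rw [dirichletEnergy, dirichletEnergy, mul_sum]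
  refine sum_le_sum fun e _ => ?_
  have hr : 0 < r e := pos_of_mul_pos_right ((hr' e).trans_le (hle e)) hc.le
  rw [← mul_div_assoc, div_le_div_iff₀ hr (hr' e), mul_comm c, mul_assoc]
  exact mul_le_mul_of_nonneg_left (hle e) (sq_nonneg _)

lemma dirichletEnergy_of_scale_edge [DecidableEq E] {r r' : E → ℝ} {h : E} {γ : ℝ}
    (hr' : ∀ e, r' e = if e = h then γ * r e else r e) (φ : V → ℝ) :
    dirichletEnergy ep r' φ =
      dirichletEnergy ep r φ - (1 - γ⁻¹) * ((φ (ep h).1 - φ (ep h).2) ^ 2 / r h) := by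
  have hdiff := dirichletEnergy_sub_dirichletEnergy_of_forall_ne (ep := ep) (r := r) (r' := r')
    (h := h) (fun e he => by rw [hr' e, if_neg he]) φ
  rw [hr' h, if_pos rfl, div_mul_eq_div_div_swap, div_eq_inv_mul _ γ] at hdiff
  linarith

end Dirichlet

section Conductance

variable {V E : Type*} [Fintype E] {ep : E → V × V} {s t : V}

lemma Ceff_eq_sInf (r : E → ℝ) :
    Ceff ep s t r = sInf {x | ∃ φ : V → ℝ, φ s = 1 ∧ φ t = 0 ∧ x = dirichletEnergy ep r φ} :=
  rfl

lemma Ceff_nonneg {r : E → ℝ} (hr : ∀ e, 0 ≤ r e) : 0 ≤ Ceff ep s t r := by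
  rw [Ceff_eq_sInf]
  refine Real.sInf_nonneg ?_
  rintro x ⟨φ, -, -, rfl⟩
  exact dirichletEnergy_nonneg hr φ

lemma Ceff_le_dirichletEnergy {r : E → ℝ} (hr : ∀ e, 0 ≤ r e) {φ : V → ℝ}
    (hs : φ s = 1) (ht : φ t = 0) : Ceff ep s t r ≤ dirichletEnergy ep r φ := by
  rw [Ceff_eq_sInf]
  refine csInf_le ⟨0, ?_⟩ ⟨φ, hs, ht, rfl⟩
  rintro x ⟨ψ, -, -, rfl⟩
  exact dirichletEnergy_nonneg hr ψ

lemma Ceff_self (r : E → ℝ) : Ceff ep s s r = 0 := by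
  rw [Ceff_eq_sInf]
  convert Real.sInf_empty
  refine Set.eq_empty_of_forall_notMem ?_
  rintro x ⟨φ, h1, h0, -⟩
  exact one_ne_zero (h1.symm.trans h0)

lemma Ceff_le_mul_Ceff_of_le_mul {r r' : E → ℝ} {c : ℝ} (hc : 0 < c)
    (hr' : ∀ e, 0 < r' e) (hle : ∀ e, r' e ≤ c * r e) :
    Ceff ep s t r ≤ c * Ceff ep s t r' := by
  obtain rfl | hst := eq_or_ne s t
  · simp [Ceff_self]
  have hr : ∀ e, 0 ≤ r e := fun e =>
    (pos_of_mul_pos_right ((hr' e).trans_le (hle e)) hc.le).le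
  rw [← div_le_iff₀' hc, Ceff_eq_sInf r']
  classical
  refine le_csInf ⟨_, Pi.single s 1, by simp, by simp [hst.symm], rfl⟩ ?_
  rintro x ⟨φ, hs, ht, rfl⟩
  rw [div_le_iff₀' hc]
  exact (Ceff_le_dirichletEnergy hr hs ht).trans (dirichletEnergy_le_mul_of_le_mul hc hr' hle φ)

end Conductance

theorem reff_increase_of_scaling_edge_general {V E : Type*} [Fintype E]
    [DecidableEq E]
    (ep : E → V × V) (s t : V)
    (r r' : E → ℝ) (hr : ∀ e, 0 < r e)
    (f : E → ℝ) (φ : V → ℝ) (h : E) (β γ : ℝ) (hγ : 0 < γ)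
    (hφs : φ s = 1) (hφt : φ t = 0)
    (hmin : ∑ e, (φ (ep e).1 - φ (ep e).2) ^ 2 / r e = Ceff ep s t r)
    (hOhm : ∀ e, f e = (φ (ep e).1 - φ (ep e).2) / r e)
    (hβ : f h ^ 2 * r h = β * ∑ e, r e * f e ^ 2)
    (hr' : ∀ e, r' e = if e = h then γ * r e else r e) :
    Reff ep s t r' ≥ γ / (β + γ * (1 - β)) * Reff ep s t r := by
  have hr'pos := pos_of_scale_edge hr' hr hγ
  rw [ge_iff_le, Reff, Reff]
  set C := Ceff ep s t r
  have hC : dirichletEnergy ep r φ = C := hmin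
  have hβC : (φ (ep h).1 - φ (ep h).2) ^ 2 / r h = β * C := by
    have hfh : f h ^ 2 * r h = (φ (ep h).1 - φ (ep h).2) ^ 2 / r h := by
      rw [hOhm h]
      field_simp [(hr h).ne']
    rw [← hfh, hβ, sum_mul_sq_eq_dirichletEnergy (fun e => (hr e).ne') hOhm, hC]
  have hub : Ceff ep s t r' ≤ C - (1 - γ⁻¹) * (β * C) := by
    rw [← hβC, ← hC, ← dirichletEnergy_of_scale_edge hr']
    exact Ceff_le_dirichletEnergy (fun e => (hr'pos e).le) hφs hφt
  obtain hC0 | hCpos := (show 0 ≤ C from Ceff_nonneg fun e => (hr e).le).eq_or_lt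
  · rw [← hC0, div_zero, mul_zero]
    exact one_div_nonneg.mpr (Ceff_nonneg fun e => (hr'pos e).le)
  have hC'pos : 0 < Ceff ep s t r' := by
    have := Ceff_le_mul_Ceff_of_le_mul (ep := ep) (s := s) (t := t) (lt_max_of_lt_left one_pos)
      hr'pos (le_max_mul_of_scale_edge hr' fun e => (hr e).le)
    exact pos_of_mul_pos_right (hCpos.trans_le this) (le_max_of_le_left zero_le_one)
  have hE' : C - (1 - γ⁻¹) * (β * C) = C * (β + γ * (1 - β)) / γ := by
    field_simp
    ring
  calc γ / (β + γ * (1 - β)) * (1 / C) = 1 / (C - (1 - γ⁻¹) * (β * C)) := by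
        rw [hE', one_div_div, div_mul_div_comm, mul_one, mul_comm C]
    _ ≤ 1 / Ceff ep s t r' := one_div_le_one_div_of_le hC'pos hub

/-- If an edge `h` accounts for a β fraction of the energy of the electrical s-t flow,
and its resistance is multiplied by γ, then the effective resistance increases by a
factor of at least γ/(β+γ(1-β)). The electrical flow is described by potentials φ
attaining the effective conductance, with f given by Ohm's law. -/
theorem reff_increase_of_scaling_edge {V E : Type*} [Fintype V] [Fintype E]
    [DecidableEq E]
    (ep : E → V × V) (s t : V) (hst : s ≠ t)
    (r r' : E → ℝ) (hr : ∀ e, 0 < r e)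
    (f : E → ℝ) (φ : V → ℝ) (h : E) (β γ : ℝ) (hγ : 0 < γ)
    (hφs : φ s = 1) (hφt : φ t = 0)
    (hmin : ∑ e, (φ (ep e).1 - φ (ep e).2) ^ 2 / r e = Ceff ep s t r)
    (hOhm : ∀ e, f e = (φ (ep e).1 - φ (ep e).2) / r e)
    (hβ : f h ^ 2 * r h = β * ∑ e, r e * f e ^ 2)
    (hr' : ∀ e, r' e = if e = h then γ * r e else r e) :
    Reff ep s t r' ≥ γ / (β + γ * (1 - β)) * Reff ep s t r :=
  reff_increase_of_scaling_edge_general ep s t r r' hr f φ h β γ hγ hφs hφt hmin hOhm hβ hr'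
end

section
/- Let f be a flow with resistances r_e = (w_e + ε|w|₁/(3m))/u_e² whose energy satisfies E_r(f) ≤ (1+ε)|w|₁, where 0 < ε < 1/2. Then the weighted average congestion satisfies Σ_e w_e·cong_f(e) ≤ (1+ε)|w|₁, where cong_f(e) = |f(e)|/u_e. -/
/-!
Since `r_e ≥ w_e / u_e²`, the energy of `f` dominates the weighted second moment
`Σ_e w_e cong_f(e)²` of the congestion, so that moment is at most `(1+ε)|w|₁`. By Cauchy–Schwarz
the square of the first moment is at most `|w|₁` times the second, hence at most
`(1+ε)|w|₁² ≤ ((1+ε)|w|₁)²`.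
-/

open Finset

section WeightedMoments

variable {ι R : Type*} [CommRing R] [LinearOrder R] [IsStrictOrderedRing R] {s : Finset ι}
  {w x : ι → R}

theorem sq_sum_mul_le_sum_mul_sum_mul_sq (hw : ∀ i ∈ s, 0 ≤ w i) :
    (∑ i ∈ s, w i * x i) ^ 2 ≤ (∑ i ∈ s, w i) * ∑ i ∈ s, w i * x i ^ 2 :=
  sum_sq_le_sum_mul_sum_of_sq_le_mul s hw (fun i hi => mul_nonneg (hw i hi) (sq_nonneg _))
    fun i _ => (by ring : (w i * x i) ^ 2 = w i * (w i * x i ^ 2)).le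

theorem sum_mul_le_of_sum_mul_sq_le {c : R} (hw : ∀ i ∈ s, 0 ≤ w i) (hc : 1 ≤ c)
    (hsq : ∑ i ∈ s, w i * x i ^ 2 ≤ c * ∑ i ∈ s, w i) :
    ∑ i ∈ s, w i * x i ≤ c * ∑ i ∈ s, w i := by
  set W := ∑ i ∈ s, w i
  have hW : 0 ≤ W := sum_nonneg hw
  have hsq' : (∑ i ∈ s, w i * x i) ^ 2 ≤ (c * W) ^ 2 :=
    calc (∑ i ∈ s, w i * x i) ^ 2 ≤ W * ∑ i ∈ s, w i * x i ^ 2 :=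
          sq_sum_mul_le_sum_mul_sum_mul_sq hw
      _ ≤ W * (c * W) := mul_le_mul_of_nonneg_left hsq hW
      _ ≤ (c * W) ^ 2 := by nlinarith [mul_nonneg hW hW]
  exact (abs_le_of_sq_le_sq' hsq' (by positivity)).2

end WeightedMoments

theorem sum_mul_sq_abs_div_le_sum_mul_sq {ι : Type*} {s : Finset ι} {w u f r : ι → ℝ}
    (hr : ∀ i ∈ s, w i / u i ^ 2 ≤ r i) :
    ∑ i ∈ s, w i * (|f i| / u i) ^ 2 ≤ ∑ i ∈ s, r i * f i ^ 2 := by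
  refine sum_le_sum fun i hi => ?_
  calc w i * (|f i| / u i) ^ 2 = w i / u i ^ 2 * f i ^ 2 := by rw [div_pow, sq_abs]; ring
    _ ≤ r i * f i ^ 2 := mul_le_mul_of_nonneg_right (hr i hi) (sq_nonneg _)

theorem weighted_average_congestion_bound_general {E : Type*} [Fintype E]
    (ε : ℝ) (hε0 : 0 < ε)
    (w u f r : E → ℝ)
    (hw : ∀ e, 1 ≤ w e)
    (hr : ∀ e, r e = (w e + ε * (∑ e', w e') / (3 * (Fintype.card E : ℝ))) / u e ^ 2)
    (henergy : ∑ e, r e * f e ^ 2 ≤ (1 + ε) * ∑ e, w e) :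
    ∑ e, w e * (|f e| / u e) ≤ (1 + ε) * ∑ e, w e := by
  have hw0 : ∀ e ∈ univ, 0 ≤ w e := fun e _ => zero_le_one.trans (hw e)
  have hr_ge : ∀ e ∈ univ, w e / u e ^ 2 ≤ r e := fun e _ => by
    have hboost : 0 ≤ ε * (∑ e', w e') / (3 * (Fintype.card E : ℝ)) :=
      div_nonneg (mul_nonneg hε0.le (sum_nonneg hw0)) (by positivity)
    rw [hr e]
    gcongr
    exact le_add_of_nonneg_right hboost
  exact sum_mul_le_of_sum_mul_sq_le hw0 (by linarith)
    ((sum_mul_sq_abs_div_le_sum_mul_sq hr_ge).trans henergy)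

/-- If a flow with resistances r_e = (w_e + ε|w|₁/(3m))/u_e² has energy at most
(1+ε)|w|₁, then its weighted average congestion is at most (1+ε)|w|₁. -/
theorem weighted_average_congestion_bound {E : Type*} [Fintype E]
    (ε : ℝ) (hε0 : 0 < ε) (hε1 : ε < 1 / 2)
    (w u f r : E → ℝ)
    (hw : ∀ e, 1 ≤ w e) (hu : ∀ e, 0 < u e)
    (hm : 0 < Fintype.card E)
    (hr : ∀ e, r e = (w e + ε * (∑ e', w e') / (3 * (Fintype.card E : ℝ))) / u e ^ 2)
    (henergy : ∑ e, r e * f e ^ 2 ≤ (1 + ε) * ∑ e, w e) :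
    ∑ e, w e * (|f e| / u e) ≤ (1 + ε) * ∑ e, w e :=
  weighted_average_congestion_bound_general ε hε0 w u f r hw hr henergy
end

section
/- Let f be a flow with resistances r_e = (w_e + ε|w|₁/(3m))/u_e² whose energy satisfies E_r(f) ≤ (1+ε)|w|₁, where 0 < ε < 1/2. Then every edge has congestion at most 3√(m/ε): for all e, |f(e)|/u_e ≤ 3√(m/ε). -/
open Finset

/-! The uniform part `ε|w|₁/(3m)` of the resistances alone, on the single edge `e`, gives
`(ε|w|₁/(3m)) · cong_f(e)² ≤ (1+ε)|w|₁`; the factor `|w|₁` cancels, leaving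
`cong_f(e)² ≤ 3(1+ε)m/ε ≤ 9m/ε`. -/

lemma mul_sq_div_le_sum_add_div_sq_mul_sq {E : Type*} [Fintype E] {w u f : E → ℝ} {c : ℝ}
    (hw : ∀ e, 0 ≤ w e) (hc : 0 ≤ c) (e : E) :
    c * (f e / u e) ^ 2 ≤ ∑ e', (w e' + c) / u e' ^ 2 * f e' ^ 2 := calc
  c * (f e / u e) ^ 2 = c / u e ^ 2 * f e ^ 2 := by ring
  _ ≤ (w e + c) / u e ^ 2 * f e ^ 2 := by gcongr; linarith [hw e]
  _ ≤ ∑ e', (w e' + c) / u e' ^ 2 * f e' ^ 2 :=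
    single_le_sum (f := fun e' => (w e' + c) / u e' ^ 2 * f e' ^ 2)
      (fun e' _ => by have := hw e'; positivity) (mem_univ e)

lemma abs_le_sqrt_div_of_mul_sq_le {c x B : ℝ} (hc : 0 < c) (h : c * x ^ 2 ≤ B) :
    |x| ≤ Real.sqrt (B / c) :=
  Real.abs_le_sqrt <| (le_div_iff₀ hc).2 <| by linarith

theorem max_congestion_bound_general {E : Type*} [Fintype E]
    (ε : ℝ) (hε0 : 0 < ε) (hε1 : ε < 1 / 2)
    (w u f r : E → ℝ)
    (hw : ∀ e, 1 ≤ w e) (hu : ∀ e, 0 < u e)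
    (hr : ∀ e, r e = (w e + ε * (∑ e', w e') / (3 * (Fintype.card E : ℝ))) / u e ^ 2)
    (henergy : ∑ e, r e * f e ^ 2 ≤ (1 + ε) * ∑ e, w e) :
    ∀ e, |f e| / u e ≤ 3 * Real.sqrt ((Fintype.card E : ℝ) / ε) := by
  intro e
  set m : ℝ := (Fintype.card E : ℝ)
  set W : ℝ := ∑ e', w e'
  have hm : 0 < m := by simpa [m] using Fintype.card_pos_iff.2 ⟨e⟩
  have hmW : m ≤ W := by simpa [m] using card_nsmul_le_sum univ w 1 fun e _ => hw e
  have hc : 0 < ε * W / (3 * m) := by have := hm.trans_le hmW; positivity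
  simp only [hr] at henergy
  have hcong := abs_le_sqrt_div_of_mul_sq_le hc <|
    (mul_sq_div_le_sum_add_div_sq_mul_sq (fun e => by linarith [hw e]) hc.le e).trans henergy
  have hcancel : (1 + ε) * W / (ε * W / (3 * m)) = 3 * (1 + ε) * (m / ε) := by
    field_simp [(hm.trans_le hmW).ne']
  rw [abs_div, abs_of_pos (hu e)] at hcong
  calc |f e| / u e ≤ Real.sqrt (3 * (1 + ε) * (m / ε)) := hcancel ▸ hcong
    _ ≤ Real.sqrt (3 ^ 2 * (m / ε)) := by gcongr; linarith
    _ = 3 * Real.sqrt (m / ε) := by rw [Real.sqrt_mul' _ (by positivity), Real.sqrt_sq (by norm_num)]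

/-- If a flow with resistances r_e = (w_e + ε|w|₁/(3m))/u_e² has energy at most
(1+ε)|w|₁, then every edge has congestion at most 3√(m/ε). -/
theorem max_congestion_bound {E : Type*} [Fintype E]
    (ε : ℝ) (hε0 : 0 < ε) (hε1 : ε < 1 / 2)
    (w u f r : E → ℝ)
    (hw : ∀ e, 1 ≤ w e) (hu : ∀ e, 0 < u e)
    (hm : 1 ≤ Fintype.card E)
    (hr : ∀ e, r e = (w e + ε * (∑ e', w e') / (3 * (Fintype.card E : ℝ))) / u e ^ 2)
    (henergy : ∑ e, r e * f e ^ 2 ≤ (1 + ε) * ∑ e, w e) :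
    ∀ e, |f e| / u e ≤ 3 * Real.sqrt ((Fintype.card E : ℝ) / ε) :=
  max_congestion_bound_general ε hε0 hε1 w u f r hw hu hr henergy
end

section
/- Let φ be vertex potentials with φ(s) = 1 and φ(t) = 0 on a graph with nonnegative edge capacities u_e. Then there exists x ∈ [0,1] such that the cut S_x = {v : φ(v) > x} has capacity at most Σ_{(u,v)∈E} |φ(u) - φ(v)|·u_{(u,v)}. -/
/-!
Choose the threshold `x` uniformly in `[0, 1]`. An edge `(v, v')` is cut by `S_x` exactly when `x`
lies in the half-open interval between `φ v` and `φ v'`, whose length is `|φ v - φ v'|`. Hence the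
expected capacity of `S_x` is at most `∑_e |φ(e.1) - φ(e.2)| u_e`, and some threshold does no worse
than the average.
-/

open Finset MeasureTheory

theorem lt_xor_lt_iff_mem_Ico {α : Type*} [LinearOrder α] {a b x : α} :
    ((x < a ∧ ¬ x < b) ∨ (¬ x < a ∧ x < b)) ↔ x ∈ Set.Ico (min a b) (max a b) := by
  rw [Set.mem_Ico, min_le_iff, lt_max_iff]
  grind

theorem setIntegral_indicator_const_le {α : Type*} [MeasurableSpace α] {μ : Measure α}
    {s t : Set α} (ht : MeasurableSet t) (htμ : μ t ≠ ⊤) {c : ℝ} (hc : 0 ≤ c) :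
    ∫ x in s, t.indicator (fun _ => c) x ∂μ ≤ μ.real t * c := by
  rw [setIntegral_indicator ht, setIntegral_const, smul_eq_mul]
  exact mul_le_mul_of_nonneg_right (measureReal_mono Set.inter_subset_right htμ) hc

section CutWeight

variable {ι : Type*} [Fintype ι]

noncomputable def cutWeight (a b w : ι → ℝ) (x : ℝ) : ℝ :=
  ∑ i ∈ univ.filter (fun i => (x < a i ∧ ¬ x < b i) ∨ (¬ x < a i ∧ x < b i)), w i

theorem cutWeight_eq_sum_indicator (a b w : ι → ℝ) (x : ℝ) :
    cutWeight a b w x =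
      ∑ i, (Set.Ico (min (a i) (b i)) (max (a i) (b i))).indicator (fun _ => w i) x := by
  classical
  rw [cutWeight, sum_filter]
  refine sum_congr rfl fun i _ => ?_
  simp only [Set.indicator_apply, lt_xor_lt_iff_mem_Ico]

theorem integrable_indicator_Ico_const (p q c : ℝ) :
    Integrable ((Set.Ico p q).indicator fun _ => c) :=
  (integrable_indicator_iff measurableSet_Ico).2 (integrableOn_const measure_Ico_lt_top.ne)

theorem integrable_cutWeight (a b w : ι → ℝ) : Integrable (cutWeight a b w) := by
  simp only [funext (cutWeight_eq_sum_indicator a b w)]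
  exact integrable_finsetSum _ fun i _ => integrable_indicator_Ico_const _ _ _

theorem setIntegral_cutWeight_le (a b : ι → ℝ) {w : ι → ℝ} (hw : ∀ i, 0 ≤ w i) (s : Set ℝ) :
    ∫ x in s, cutWeight a b w x ≤ ∑ i, |a i - b i| * w i := by
  simp only [cutWeight_eq_sum_indicator]
  rw [integral_finsetSum _ fun i _ => (integrable_indicator_Ico_const _ _ _).integrableOn]
  refine sum_le_sum fun i _ => ?_
  calc _ ≤ volume.real (Set.Ico (min (a i) (b i)) (max (a i) (b i))) * w i :=
        setIntegral_indicator_const_le measurableSet_Ico measure_Ico_lt_top.ne (hw i)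
    _ = |a i - b i| * w i := by
        rw [Real.volume_real_Ico_of_le min_le_max, max_sub_min_eq_abs, abs_sub_comm]

theorem exists_mem_Icc_cutWeight_le (a b : ι → ℝ) {w : ι → ℝ} (hw : ∀ i, 0 ≤ w i) :
    ∃ x ∈ Set.Icc (0 : ℝ) 1, cutWeight a b w x ≤ ∑ i, |a i - b i| * w i := by
  have hvol : volume (Set.Icc (0 : ℝ) 1) = 1 := by simp [Real.volume_Icc]
  obtain ⟨x, hx, hle⟩ := exists_le_setAverage (s := Set.Icc (0 : ℝ) 1) (by simp [hvol])
    (by simp [hvol]) (integrable_cutWeight a b w).integrableOn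
  refine ⟨x, hx, hle.trans ?_⟩
  rw [setAverage_eq, measureReal_def, hvol]
  simpa using setIntegral_cutWeight_le a b hw _

end CutWeight

theorem threshold_cut_bound_general {V E : Type*} [Fintype E]
    (ep : E → V × V)
    (u : E → ℝ) (hu : ∀ e, 0 ≤ u e)
    (φ : V → ℝ) :
    ∃ x : ℝ, 0 ≤ x ∧ x ≤ 1 ∧
      ∑ e ∈ Finset.univ.filter (fun e =>
          ((x < φ (ep e).1 ∧ ¬ x < φ (ep e).2) ∨ (¬ x < φ (ep e).1 ∧ x < φ (ep e).2))),
        u e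
      ≤ ∑ e, |φ (ep e).1 - φ (ep e).2| * u e := by
  obtain ⟨x, ⟨hx0, hx1⟩, hle⟩ :=
    exists_mem_Icc_cutWeight_le (fun e => φ (ep e).1) (fun e => φ (ep e).2) hu
  exact ⟨x, hx0, hx1, hle⟩

/-- Threshold rounding of potentials: for potentials φ with φ(s)=1, φ(t)=0, some
threshold x ∈ [0,1] yields a cut S_x = {v : φ(v) > x} whose capacity is at most
Σ_e |φ(u)-φ(v)|·u_e. -/
theorem threshold_cut_bound {V E : Type*} [Fintype V] [Fintype E]
    (ep : E → V × V) (s t : V) (hst : s ≠ t)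
    (u : E → ℝ) (hu : ∀ e, 0 ≤ u e)
    (φ : V → ℝ) (hφs : φ s = 1) (hφt : φ t = 0) :
    ∃ x : ℝ, 0 ≤ x ∧ x ≤ 1 ∧
      ∑ e ∈ Finset.univ.filter (fun e =>
          ((x < φ (ep e).1 ∧ ¬ x < φ (ep e).2) ∨ (¬ x < φ (ep e).1 ∧ x < φ (ep e).2))),
        u e
      ≤ ∑ e, |φ (ep e).1 - φ (ep e).2| * u e :=
  threshold_cut_bound_general ep u hu φ
end
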